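/- Suppose (x*_I, x*_C) ∈ X_MO maximizes z̄ᵏ(C_I^{1:ℓ} x_I + C_C^{1:ℓ} x_C) − (c⁰_I·x_I + c⁰_C·x_C) over X_MO, and suppose (x̂_I, x̂_C) minimizes the sum of the ℓ+1 components of Cx over the set {(x_I, x_C) ∈ X_MO : Cx ≤ Cx* componentwise}, where x* = (x*_I, x*_C). Then (x̂_I, x̂_C) also maximizes z̄ᵏ(C_I^{1:ℓ} x_I + C_C^{1:ℓ} x_C) − (c⁰_I·x_I + c⁰_C·x_C) over X_MO. -/
import Mathlib


open Matrix Filter Topology Set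

noncomputable section

/-- Primal feasibility for the restricted LP with data `(ζ, β)`. -/
def LPfeas {l m nc : ℕ} (CC : Matrix (Fin l) (Fin nc) ℝ) (AC : Matrix (Fin m) (Fin nc) ℝ)
    (ζ : Fin l → ℝ) (β : Fin m → ℝ) (x : Fin nc → ℝ) : Prop :=
  (∀ j, 0 ≤ x j) ∧ CC.mulVec x ≤ ζ ∧ AC.mulVec x = β

/-- The restricted LP value function, taking the value `+∞` when infeasible. -/
def zLP {l m nc : ℕ} (cC : Fin nc → ℝ) (CC : Matrix (Fin l) (Fin nc) ℝ)
    (AC : Matrix (Fin m) (Fin nc) ℝ) (ζ : Fin l → ℝ) (β : Fin m → ℝ) : EReal :=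
  sInf {y : EReal | ∃ x : Fin nc → ℝ, LPfeas CC AC ζ β x ∧ y = ((cC ⬝ᵥ x : ℝ) : EReal)}

/-- The finite domain (feasibility region) of the restricted LP value function. -/
def CLP {l m nc : ℕ} (CC : Matrix (Fin l) (Fin nc) ℝ) (AC : Matrix (Fin m) (Fin nc) ℝ)
    (β : Fin m → ℝ) : Set (Fin l → ℝ) :=
  {ζ | ∃ x : Fin nc → ℝ, LPfeas CC AC ζ β x}

/-- The dual feasible region `P_D`. -/
def PD {l m nc : ℕ} (cC : Fin nc → ℝ) (CC : Matrix (Fin l) (Fin nc) ℝ)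
    (AC : Matrix (Fin m) (Fin nc) ℝ) : Set ((Fin l → ℝ) × (Fin m → ℝ)) :=
  {uv | uv.1 ≤ 0 ∧ CC.transpose.mulVec uv.1 + AC.transpose.mulVec uv.2 ≤ cC}

/-- Projection of the optimal face of the dual LP onto the `u`-coordinates. -/
def projOPT {l m nc : ℕ} (cC : Fin nc → ℝ) (CC : Matrix (Fin l) (Fin nc) ℝ)
    (AC : Matrix (Fin m) (Fin nc) ℝ) (ζ : Fin l → ℝ) (β : Fin m → ℝ) : Set (Fin l → ℝ) :=
  {u | ∃ v : Fin m → ℝ, (u, v) ∈ PD cC CC AC ∧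
    ((ζ ⬝ᵥ u + β ⬝ᵥ v : ℝ) : EReal) = zLP cC CC AC ζ β}

/-- A real vector with natural-number entries. -/
def IsNatVec {r : ℕ} (x : Fin r → ℝ) : Prop := ∀ i, ∃ k : ℕ, x i = (k : ℝ)

/-- The MILP feasible region `X_MO`. -/
def XMO {m nc r : ℕ} (AI : Matrix (Fin m) (Fin r) ℝ) (AC : Matrix (Fin m) (Fin nc) ℝ)
    (b : Fin m → ℝ) : Set ((Fin r → ℝ) × (Fin nc → ℝ)) :=
  {p | IsNatVec p.1 ∧ (∀ j, 0 ≤ p.2 j) ∧ AI.mulVec p.1 + AC.mulVec p.2 = b}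

/-- The restricted feasible region `S(ζ)`. -/
def Sreg {l m nc r : ℕ} (AI : Matrix (Fin m) (Fin r) ℝ) (AC : Matrix (Fin m) (Fin nc) ℝ)
    (b : Fin m → ℝ) (CI : Matrix (Fin l) (Fin r) ℝ) (CC : Matrix (Fin l) (Fin nc) ℝ)
    (ζ : Fin l → ℝ) : Set ((Fin r → ℝ) × (Fin nc → ℝ)) :=
  {p ∈ XMO AI AC b | CI.mulVec p.1 + CC.mulVec p.2 ≤ ζ}

/-- The restricted value function `z`, taking the value `+∞` when `S(ζ) = ∅`. -/
def zRVF {l m nc r : ℕ} (cI : Fin r → ℝ) (cC : Fin nc → ℝ) (AI : Matrix (Fin m) (Fin r) ℝ)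
    (AC : Matrix (Fin m) (Fin nc) ℝ) (b : Fin m → ℝ) (CI : Matrix (Fin l) (Fin r) ℝ)
    (CC : Matrix (Fin l) (Fin nc) ℝ) (ζ : Fin l → ℝ) : EReal :=
  sInf {y : EReal | ∃ p ∈ Sreg AI AC b CI CC ζ, y = ((cI ⬝ᵥ p.1 + cC ⬝ᵥ p.2 : ℝ) : EReal)}

/-- The finite domain `𝒞` of the restricted value function. -/
def Cdom {l m nc r : ℕ} (AI : Matrix (Fin m) (Fin r) ℝ) (AC : Matrix (Fin m) (Fin nc) ℝ)
    (b : Fin m → ℝ) (CI : Matrix (Fin l) (Fin r) ℝ) (CC : Matrix (Fin l) (Fin nc) ℝ) :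
    Set (Fin l → ℝ) :=
  {ζ | (Sreg AI AC b CI CC ζ).Nonempty}

/-- The set `S_I` of integer parts of feasible solutions. -/
def SI {m nc r : ℕ} (AI : Matrix (Fin m) (Fin r) ℝ) (AC : Matrix (Fin m) (Fin nc) ℝ)
    (b : Fin m → ℝ) : Set (Fin r → ℝ) :=
  {xI | ∃ xC : Fin nc → ℝ, (xI, xC) ∈ XMO AI AC b}

/-- The bounding function `z̄(ζ; x̂_I)`. -/
def zbar {l m nc r : ℕ} (cI : Fin r → ℝ) (cC : Fin nc → ℝ) (AI : Matrix (Fin m) (Fin r) ℝ)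
    (AC : Matrix (Fin m) (Fin nc) ℝ) (b : Fin m → ℝ) (CI : Matrix (Fin l) (Fin r) ℝ)
    (CC : Matrix (Fin l) (Fin nc) ℝ) (ζ : Fin l → ℝ) (xI : Fin r → ℝ) : EReal :=
  ((cI ⬝ᵥ xI : ℝ) : EReal) + zLP cC CC AC (ζ - CI.mulVec xI) (b - AI.mulVec xI)

/-- The set `S*_I(ζ)` of integer parts whose bounding function is active at `ζ`. -/
def SstarI {l m nc r : ℕ} (cI : Fin r → ℝ) (cC : Fin nc → ℝ) (AI : Matrix (Fin m) (Fin r) ℝ)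
    (AC : Matrix (Fin m) (Fin nc) ℝ) (b : Fin m → ℝ) (CI : Matrix (Fin l) (Fin r) ℝ)
    (CC : Matrix (Fin l) (Fin nc) ℝ) (ζ : Fin l → ℝ) : Set (Fin r → ℝ) :=
  {xI ∈ SI AI AC b | zbar cI cC AI AC b CI CC ζ xI = zRVF cI cC AI AC b CI CC ζ}

/-- A description of the restricted value function. -/
def IsDescription {l m nc r : ℕ} (cI : Fin r → ℝ) (cC : Fin nc → ℝ)
    (AI : Matrix (Fin m) (Fin r) ℝ) (AC : Matrix (Fin m) (Fin nc) ℝ) (b : Fin m → ℝ)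
    (CI : Matrix (Fin l) (Fin r) ℝ) (CC : Matrix (Fin l) (Fin nc) ℝ)
    (S : Set (Fin r → ℝ)) : Prop :=
  S ⊆ SI AI AC b ∧
  ∀ ζ ∈ Cdom AI AC b CI CC, ∃ xI ∈ S, ∃ xC : Fin nc → ℝ,
    (xI, xC) ∈ Sreg AI AC b CI CC ζ ∧
    ((cI ⬝ᵥ xI + cC ⬝ᵥ xC : ℝ) : EReal) = zRVF cI cC AI AC b CI CC ζ

/-- A minimal description of the restricted value function. -/
def IsMinimalDescription {l m nc r : ℕ} (cI : Fin r → ℝ) (cC : Fin nc → ℝ)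
    (AI : Matrix (Fin m) (Fin r) ℝ) (AC : Matrix (Fin m) (Fin nc) ℝ) (b : Fin m → ℝ)
    (CI : Matrix (Fin l) (Fin r) ℝ) (CC : Matrix (Fin l) (Fin nc) ℝ)
    (S : Set (Fin r → ℝ)) : Prop :=
  IsDescription cI cC AI AC b CI CC S ∧
  ∀ S' : Set (Fin r → ℝ), S' ⊂ S → ¬ IsDescription cI cC AI AC b CI CC S'

/-- One-sided directional derivative (as a limit in `EReal`). -/
def HasDirDeriv {l : ℕ} (f : (Fin l → ℝ) → EReal) (x d : Fin l → ℝ) (L : EReal) : Prop :=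
  Tendsto (fun t : ℝ => ((t⁻¹ : ℝ) : EReal) * (f (x + t • d) - f x)) (𝓝[>] (0 : ℝ)) (𝓝 L)

/-- The criterion-space vector `Cx ∈ ℝ^{ℓ+1}` of a feasible point. -/
def CritVec {l nc r : ℕ} (cI : Fin r → ℝ) (cC : Fin nc → ℝ) (CI : Matrix (Fin l) (Fin r) ℝ)
    (CC : Matrix (Fin l) (Fin nc) ℝ) (p : (Fin r → ℝ) × (Fin nc → ℝ)) : ℝ × (Fin l → ℝ) :=
  (cI ⬝ᵥ p.1 + cC ⬝ᵥ p.2, CI.mulVec p.1 + CC.mulVec p.2)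

/-- Efficient solutions of the multiobjective MILP. -/
def IsEfficient {l m nc r : ℕ} (cI : Fin r → ℝ) (cC : Fin nc → ℝ)
    (AI : Matrix (Fin m) (Fin r) ℝ) (AC : Matrix (Fin m) (Fin nc) ℝ) (b : Fin m → ℝ)
    (CI : Matrix (Fin l) (Fin r) ℝ) (CC : Matrix (Fin l) (Fin nc) ℝ)
    (p : (Fin r → ℝ) × (Fin nc → ℝ)) : Prop :=
  p ∈ XMO AI AC b ∧ ¬ ∃ q ∈ XMO AI AC b,
    CritVec cI cC CI CC q ≤ CritVec cI cC CI CC p ∧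
    CritVec cI cC CI CC q ≠ CritVec cI cC CI CC p

/-- The upper approximation `z̄ᵏ` built from a set `Sk` of integer parts and bound `U`. -/
def zbark {l m nc r : ℕ} (cI : Fin r → ℝ) (cC : Fin nc → ℝ) (AI : Matrix (Fin m) (Fin r) ℝ)
    (AC : Matrix (Fin m) (Fin nc) ℝ) (b : Fin m → ℝ) (CI : Matrix (Fin l) (Fin r) ℝ)
    (CC : Matrix (Fin l) (Fin nc) ℝ) (Sk : Set (Fin r → ℝ)) (U : ℝ) (ζ : Fin l → ℝ) : EReal :=
  min (sInf {y : EReal | ∃ xI ∈ Sk, y = zbar cI cC AI AC b CI CC ζ xI}) (U : EReal)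


lemma zLP_antitone {l m nc : ℕ} (cC : Fin nc → ℝ) (CC : Matrix (Fin l) (Fin nc) ℝ)
    (AC : Matrix (Fin m) (Fin nc) ℝ) {ζ₁ ζ₂ : Fin l → ℝ} (h : ζ₁ ≤ ζ₂) (β : Fin m → ℝ) :
    zLP cC CC AC ζ₂ β ≤ zLP cC CC AC ζ₁ β := by
  apply sInf_le_sInf
  rintro y ⟨x, ⟨hx0, hxC, hxA⟩, rfl⟩
  exact ⟨x, ⟨hx0, le_trans hxC h, hxA⟩, rfl⟩

lemma zbar_antitone {l m nc r : ℕ} (cI : Fin r → ℝ) (cC : Fin nc → ℝ)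
    (AI : Matrix (Fin m) (Fin r) ℝ) (AC : Matrix (Fin m) (Fin nc) ℝ) (b : Fin m → ℝ)
    (CI : Matrix (Fin l) (Fin r) ℝ) (CC : Matrix (Fin l) (Fin nc) ℝ)
    {ζ₁ ζ₂ : Fin l → ℝ} (h : ζ₁ ≤ ζ₂) (xI : Fin r → ℝ) :
    zbar cI cC AI AC b CI CC ζ₂ xI ≤ zbar cI cC AI AC b CI CC ζ₁ xI := by
  unfold zbar
  gcongr
  exact zLP_antitone cC CC AC (fun i => sub_le_sub_right (h i) (CI.mulVec xI i)) _

lemma zbark_antitone {l m nc r : ℕ} (cI : Fin r → ℝ) (cC : Fin nc → ℝ)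
    (AI : Matrix (Fin m) (Fin r) ℝ) (AC : Matrix (Fin m) (Fin nc) ℝ) (b : Fin m → ℝ)
    (CI : Matrix (Fin l) (Fin r) ℝ) (CC : Matrix (Fin l) (Fin nc) ℝ)
    (Sk : Set (Fin r → ℝ)) (U : ℝ) {ζ₁ ζ₂ : Fin l → ℝ} (h : ζ₁ ≤ ζ₂) :
    zbark cI cC AI AC b CI CC Sk U ζ₂ ≤ zbark cI cC AI AC b CI CC Sk U ζ₁ := by
  unfold zbark
  apply min_le_min _ le_rfl
  apply le_sInf
  rintro y ⟨xI, hxI, rfl⟩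
  exact sInf_le_of_le ⟨xI, hxI, rfl⟩ (zbar_antitone cI cC AI AC b CI CC h xI)

theorem stmt_18 {l m nc r : ℕ} (cI : Fin r → ℝ) (cC : Fin nc → ℝ) (AI : Matrix (Fin m) (Fin r) ℝ)
    (AC : Matrix (Fin m) (Fin nc) ℝ) (b : Fin m → ℝ) (CI : Matrix (Fin l) (Fin r) ℝ)
    (CC : Matrix (Fin l) (Fin nc) ℝ)
    (hne : (XMO AI AC b).Nonempty) (hbdd : Bornology.IsBounded (XMO AI AC b))
    (hbot : ∀ (ζ : Fin l → ℝ) (β : Fin m → ℝ), zLP cC CC AC ζ β ≠ ⊥)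
    (Sk : Set (Fin r → ℝ)) (hSk : Sk ⊆ SI AI AC b) (hSkfin : Sk.Finite)
    (U : ℝ) (hU : ∀ ζ ∈ Cdom AI AC b CI CC, zRVF cI cC AI AC b CI CC ζ ≤ (U : EReal))
    (xs : (Fin r → ℝ) × (Fin nc → ℝ)) (hxs : xs ∈ XMO AI AC b)
    (hmax : ∀ p ∈ XMO AI AC b,
      zbark cI cC AI AC b CI CC Sk U (CI.mulVec p.1 + CC.mulVec p.2) - ((cI ⬝ᵥ p.1 + cC ⬝ᵥ p.2 : ℝ) : EReal) ≤
        zbark cI cC AI AC b CI CC Sk U (CI.mulVec xs.1 + CC.mulVec xs.2) - ((cI ⬝ᵥ xs.1 + cC ⬝ᵥ xs.2 : ℝ) : EReal))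
    (xhat : (Fin r → ℝ) × (Fin nc → ℝ)) (hxhat : xhat ∈ XMO AI AC b)
    (hdom : CritVec cI cC CI CC xhat ≤ CritVec cI cC CI CC xs)
    (hminsum : ∀ p ∈ XMO AI AC b, CritVec cI cC CI CC p ≤ CritVec cI cC CI CC xs →
      (CritVec cI cC CI CC xhat).1 + ∑ i, (CritVec cI cC CI CC xhat).2 i ≤
        (CritVec cI cC CI CC p).1 + ∑ i, (CritVec cI cC CI CC p).2 i) :
    ∀ p ∈ XMO AI AC b,
      zbark cI cC AI AC b CI CC Sk U (CI.mulVec p.1 + CC.mulVec p.2) - ((cI ⬝ᵥ p.1 + cC ⬝ᵥ p.2 : ℝ) : EReal) ≤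
        zbark cI cC AI AC b CI CC Sk U (CI.mulVec xhat.1 + CC.mulVec xhat.2) - ((cI ⬝ᵥ xhat.1 + cC ⬝ᵥ xhat.2 : ℝ) : EReal) := by
  intro p hp
  refine le_trans (hmax p hp) ?_
  have hζ : CI.mulVec xhat.1 + CC.mulVec xhat.2 ≤ CI.mulVec xs.1 + CC.mulVec xs.2 := hdom.2
  have hc : (cI ⬝ᵥ xhat.1 + cC ⬝ᵥ xhat.2 : ℝ) ≤ cI ⬝ᵥ xs.1 + cC ⬝ᵥ xs.2 := hdom.1
  exact EReal.sub_le_sub (zbark_antitone cI cC AI AC b CI CC Sk U hζ)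
    (EReal.coe_le_coe_iff.mpr hc)
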